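/- arXiv:math/0405188 — 7 statements merged into one kernel-verified Lean document; each statement's English description precedes it below -/
import Mathlib

section
/- Let ℋ and 𝒱 be finite nonempty sets of integers with 𝒱 containing a positive and a negative element (so that B(x;t) and B̄(t) have constant term 1), and let 𝔖 = ℋ × 𝒱. Then for every n ≥ 1, the coefficient of tⁿ in the formal logarithm log B(x;t) ∈ (ℚ[x,x⁻¹])[[t]] equals H(x)ⁿ · ([tⁿ] log B̄(t)), where H(x) = Σ_{h∈ℋ} x^h. -/
/-- The `n`-th coefficient of the formal logarithm `log F = Σ_{k≥1} (-1)^{k-1} (F-1)^k / k`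
of a power series `F` with constant term `1` (for such `F`, only the terms with
`1 ≤ k ≤ n` contribute to the coefficient of `tⁿ`). -/
noncomputable def logCoeff {A : Type*} [CommRing A] [Algebra ℚ A]
    (F : PowerSeries A) (n : ℕ) : A :=
  ∑ k ∈ Finset.Icc 1 n, ((-1 : ℚ) ^ (k - 1) / k) • PowerSeries.coeff n ((F - 1) ^ k)

/-- The generating function `B(x;t) ∈ (ℚ[x,x⁻¹])[[t]]` of bilateral walks with steps in `S`:
the coefficient of `tⁿ` is `Σ_i b_{n,i} x^i`, where `b_{n,i}` is the number of walks of
length `n` with steps in `S` ending at `(i,0)`. -/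
noncomputable def bilateralSeries (S : Finset (ℤ × ℤ)) : PowerSeries (LaurentPolynomial ℚ) :=
  PowerSeries.mk fun n =>
    ∑ w ∈ (Fintype.piFinset fun _ : Fin n => S).filter (fun w => (∑ l, w l).2 = 0),
      LaurentPolynomial.T (∑ l, w l).1

/-- The number of bridges of length `n` with steps in `V`. -/
noncomputable def bridgeCount (V : Finset ℤ) (n : ℕ) : ℕ :=
  Nat.card {v : Fin n → ℤ // (∀ l, v l ∈ V) ∧ ∑ l, v l = 0}

/-- The generating function `B̄(t) ∈ ℚ[[t]]` of bridges with steps in `V`. -/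
noncomputable def bridgeSeries (V : Finset ℤ) : PowerSeries ℚ :=
  PowerSeries.mk fun n => (bridgeCount V n : ℚ)

/-- The step Laurent polynomial `H(x) = Σ_{h ∈ ℋ} x^h`. -/
noncomputable def stepPoly (H : Finset ℤ) : LaurentPolynomial ℚ :=
  ∑ h ∈ H, LaurentPolynomial.T h

/-
Since `𝔖 = ℋ × 𝒱`, a walk of length `n` ending on the horizontal axis is an arbitrary
sequence of `n` horizontal steps paired with a bridge of length `n`, so
`[tⁿ] B(x;t) = b̄_n H(x)ⁿ`, i.e. `B(x;t) = B̄(H(x) t)`. Substituting `t ↦ H(x) t` scales the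
coefficient of `tⁿ` of every power of `B̄ - 1`, hence of `log B̄`, by `H(x)ⁿ`.
-/

open PowerSeries Finset

lemma LaurentPolynomial.T_sum {R ι : Type*} [CommSemiring R] (s : Finset ι) (f : ι → ℤ) :
    (LaurentPolynomial.T (∑ i ∈ s, f i) : LaurentPolynomial R)
      = ∏ i ∈ s, LaurentPolynomial.T (f i) := by
  induction s using Finset.cons_induction with
  | empty => simp [LaurentPolynomial.T_zero]
  | cons a s ha ih => rw [sum_cons, prod_cons, LaurentPolynomial.T_add, ih]

lemma Fintype.sum_piFinset_prod {ι α β M : Type*} [Fintype ι] [DecidableEq ι]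
    [AddCommMonoid M]
    (s : ι → Finset α) (t : ι → Finset β) (f : (ι → α × β) → M) :
    ∑ w ∈ piFinset fun i => s i ×ˢ t i, f w
      = ∑ g ∈ piFinset s, ∑ h ∈ piFinset t, f fun i => (g i, h i) := by
  rw [← sum_product']
  refine sum_nbij' (fun w => (fun i => (w i).1, fun i => (w i).2))
    (fun p i => (p.1 i, p.2 i)) ?_ ?_ (fun _ _ => rfl) (fun _ _ => rfl) (fun _ _ => rfl)
  · intro w hw
    simp only [Fintype.mem_piFinset, mem_product] at hw ⊢
    exact ⟨fun i => (hw i).1, fun i => (hw i).2⟩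
  · intro p hp
    simp only [Fintype.mem_piFinset, mem_product] at hp ⊢
    exact fun i => ⟨hp.1 i, hp.2 i⟩

lemma stepPoly_pow (H : Finset ℤ) (n : ℕ) :
    stepPoly H ^ n = ∑ g ∈ Fintype.piFinset fun _ : Fin n => H,
      LaurentPolynomial.T (∑ l, g l) := by
  rw [stepPoly, ← Fin.prod_const n, prod_univ_sum]
  exact sum_congr rfl fun g _ => (LaurentPolynomial.T_sum _ _).symm

lemma bridgeCount_eq_card (V : Finset ℤ) (n : ℕ) :
    bridgeCount V n = #{v ∈ Fintype.piFinset fun _ : Fin n => V | ∑ l, v l = 0} := by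
  rw [bridgeCount, ← Nat.card_eq_finsetCard]
  exact Nat.card_congr <| Equiv.subtypeEquivRight fun v => by simp

lemma coeff_bilateralSeries_prod (H V : Finset ℤ) (n : ℕ) :
    coeff n (bilateralSeries (H ×ˢ V)) = bridgeCount V n • stepPoly H ^ n := by
  rw [bilateralSeries, coeff_mk, sum_filter, Fintype.sum_piFinset_prod, stepPoly_pow,
    smul_sum]
  refine sum_congr rfl fun g _ => ?_
  simp only [Prod.fst_sum, Prod.snd_sum]
  rw [← sum_filter, sum_const, bridgeCount_eq_card]

lemma bilateralSeries_prod (H V : Finset ℤ) :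
    bilateralSeries (H ×ˢ V)
      = rescale (stepPoly H) (map (algebraMap ℚ (LaurentPolynomial ℚ)) (bridgeSeries V)) := by
  ext n
  rw [coeff_bilateralSeries_prod, coeff_rescale, coeff_map, bridgeSeries, coeff_mk,
    map_natCast, nsmul_eq_mul, mul_comm]

lemma logCoeff_rescale_map {A : Type*} [CommRing A] [Algebra ℚ A]
    (F : PowerSeries ℚ) (a : A) (n : ℕ) :
    logCoeff (rescale a (map (algebraMap ℚ A) F)) n = logCoeff F n • a ^ n := by
  rw [logCoeff, logCoeff, sum_smul]
  refine sum_congr rfl fun k _ => ?_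
  have hsub : rescale a (map (algebraMap ℚ A) F) - 1
      = rescale a (map (algebraMap ℚ A) (F - 1)) := by
    simp only [map_sub, map_one]
  rw [hsub, ← map_pow, ← map_pow, coeff_rescale, coeff_map, mul_comm, ← Algebra.smul_def,
    smul_smul, smul_eq_mul]

theorem logCoeff_bilateral_factorises_general (H V : Finset ℤ) :
    ∀ n : ℕ, 1 ≤ n →
      logCoeff (bilateralSeries (H ×ˢ V)) n
        = logCoeff (bridgeSeries V) n • stepPoly H ^ n := by
  intro n _
  rw [bilateralSeries_prod, logCoeff_rescale_map]

/-- For `𝔖 = ℋ × 𝒱`, the coefficient of `tⁿ` in `log B(x;t)` equals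
`H(x)ⁿ · [tⁿ] log B̄(t)`. -/
theorem logCoeff_bilateral_factorises (H V : Finset ℤ) (hH : H.Nonempty) (hV : V.Nonempty)
    (hVpos : ∃ v ∈ V, 0 < v) (hVneg : ∃ v ∈ V, v < 0) :
    ∀ n : ℕ, 1 ≤ n →
      logCoeff (bilateralSeries (H ×ˢ V)) n
        = logCoeff (bridgeSeries V) n • stepPoly H ^ n :=
  logCoeff_bilateral_factorises_general H V
end

section
/- Let 𝒱 be a finite set of integers and let b̄_n be the number of bridges of length n with steps in 𝒱, so that B̄(t) = Σ_{n≥0} b̄_n tⁿ ∈ ℚ[[t]] has constant term 1. Then for every n ≥ 1 the coefficient [tⁿ] log B̄(t) of the formal logarithm of B̄(t) is nonnegative. -/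
/-!
Cutting a nonempty bridge at its first return to `0` writes it uniquely as a primitive bridge
followed by a bridge, so `B̄ = 1 / (1 - P)` where `P` counts primitive bridges. Hence
`log B̄ = -log (1 - P) = Σ_{k ≥ 1} P^k / k`, which has nonnegative coefficients. For the truncated
logarithms that define `logCoeff` this identity is checked on derivatives, which agree up to
order `n - 1`.
-/

open List Finset PowerSeries

section Bridges

variable {M : Type*} [AddMonoid M] (S : Set M)

def IsBridge (l : List M) : Prop :=
  (∀ x ∈ l, x ∈ S) ∧ l.sum = 0

def IsPrimitiveBridge (l : List M) : Prop :=
  IsBridge S l ∧ l ≠ [] ∧ ∀ p, p <+: l → p ≠ [] → p.sum = 0 → p = l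

abbrev Bridges (n : ℕ) : Type _ := {l : List M // l.length = n ∧ IsBridge S l}

abbrev PrimitiveBridges (n : ℕ) : Type _ := {l : List M // l.length = n ∧ IsPrimitiveBridge S l}

variable {S}

theorem IsBridge.append {w u : List M} (hw : IsBridge S w) (hu : IsBridge S u) :
    IsBridge S (w ++ u) :=
  ⟨by simpa [or_imp, forall_and] using And.intro hw.1 hu.1, by simp [hw.2, hu.2]⟩

theorem IsPrimitiveBridge.eq_of_append_eq_append {w w' u u' : List M}
    (hw : IsPrimitiveBridge S w) (hw' : IsPrimitiveBridge S w') (h : w ++ u = w' ++ u') :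
    w = w' ∧ u = u' := by
  have hww' : w = w' := by
    rcases prefix_or_prefix_of_prefix (prefix_append w u) (h ▸ prefix_append w' u') with h | h
    · exact hw'.2.2 w h hw.2.1 hw.1.2
    · exact (hw.2.2 w' h hw'.2.1 hw'.1.2).symm
  subst hww'
  exact ⟨rfl, append_cancel_left h⟩

theorem IsBridge.exists_primitive_append {l : List M} (hl : IsBridge S l) (hne : l ≠ []) :
    ∃ w u, IsPrimitiveBridge S w ∧ IsBridge S u ∧ w ++ u = l := by
  classical
  have hex : ∃ j, 0 < j ∧ (l.take j).sum = 0 :=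
    ⟨l.length, length_pos_iff.mpr hne, by simp [hl.2]⟩
  set m := Nat.find hex
  obtain ⟨hpos, hsum⟩ : 0 < m ∧ (l.take m).sum = 0 := Nat.find_spec hex
  have hprim : IsPrimitiveBridge S (l.take m) := by
    refine ⟨⟨fun x hx => hl.1 x (mem_of_mem_take hx), hsum⟩,
      by simp [take_eq_nil_iff, hpos.ne', hne], fun p hp hpne hp0 => ?_⟩
    have hpl : p = l.take p.length := prefix_iff_eq_take.mp (hp.trans (take_prefix _ _))
    have hmin : m ≤ p.length := Nat.find_min' hex ⟨length_pos_iff.mpr hpne, hpl ▸ hp0⟩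
    exact hp.eq_of_length (le_antisymm hp.length_le ((length_take_le _ _).trans hmin))
  have hrest : IsBridge S (l.drop m) :=
    ⟨fun x hx => hl.1 x (mem_of_mem_drop hx), by simpa [hsum, hl.2] using sum_take_add_sum_drop l m⟩
  exact ⟨_, _, hprim, hrest, take_append_drop m l⟩

variable (S)

instance [Finite S] (n : ℕ) : Finite (Bridges S n) := by
  refine Set.Finite.to_subtype (((finite_length_eq S n).image (List.map (↑))).subset ?_)
  rintro l ⟨hlen, hS, -⟩
  lift l to List S using hS
  exact ⟨l, by simpa using hlen, rfl⟩

instance [Finite S] (n : ℕ) : Finite (PrimitiveBridges S n) :=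
  Finite.of_injective (fun l => (⟨l.1, l.2.1, l.2.2.1⟩ : Bridges S n))
    fun _ _ h => Subtype.ext (congrArg (fun l : Bridges S n => l.1) h)

instance : IsEmpty (PrimitiveBridges S 0) :=
  ⟨fun l => l.2.2.2.1 (length_eq_zero_iff.mp l.2.1)⟩

theorem card_bridges_zero : Nat.card (Bridges S 0) = 1 :=
  Nat.card_eq_one_iff_exists.mpr
    ⟨⟨[], rfl, by simp [IsBridge]⟩, fun l => Subtype.ext (length_eq_zero_iff.mp l.2.1)⟩

def appendBridges (n : ℕ) :
    (Σ p : antidiagonal n, PrimitiveBridges S p.1.1 × Bridges S p.1.2) → Bridges S n :=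
  fun x => ⟨x.2.1.1 ++ x.2.2.1, by
    obtain ⟨⟨⟨i, j⟩, hij⟩, ⟨w, hw, -⟩, ⟨u, hu, -⟩⟩ := x
    simpa [hw, hu] using mem_antidiagonal.mp hij, x.2.1.2.2.1.append x.2.2.2.2⟩

theorem appendBridges_bijective {n : ℕ} (hn : n ≠ 0) :
    Function.Bijective (appendBridges S n) := by
  constructor
  · rintro ⟨⟨⟨i, j⟩, hij⟩, ⟨w, hwi, hw⟩, ⟨u, huj, hu⟩⟩
      ⟨⟨⟨i', j'⟩, hij'⟩, ⟨w', hwi', hw'⟩, ⟨u', huj', hu'⟩⟩ h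
    dsimp only at hwi huj hwi' huj'
    subst hwi huj hwi' huj'
    obtain ⟨rfl, rfl⟩ := hw.eq_of_append_eq_append hw' (congrArg Subtype.val h)
    rfl
  · rintro ⟨l, hlen, hl⟩
    obtain ⟨w, u, hw, hu, rfl⟩ := hl.exists_primitive_append (by rintro rfl; exact hn hlen.symm)
    exact ⟨⟨⟨(w.length, u.length), by simpa using hlen⟩, ⟨w, rfl, hw⟩, ⟨u, rfl, hu⟩⟩,
      rfl⟩

theorem card_bridges_eq_sum [Finite S] {n : ℕ} (hn : n ≠ 0) :
    Nat.card (Bridges S n) = ∑ p ∈ antidiagonal n,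
      Nat.card (PrimitiveBridges S p.1) * Nat.card (Bridges S p.2) := by
  rw [← Nat.card_eq_of_bijective _ (appendBridges_bijective S hn), Nat.card_sigma]
  simp only [Nat.card_prod]
  exact Finset.sum_coe_sort (antidiagonal n)
    fun p => Nat.card (PrimitiveBridges S p.1) * Nat.card (Bridges S p.2)

end Bridges

namespace PowerSeries

theorem coeff_pow_nonneg {R : Type*} [CommSemiring R] [PartialOrder R] [IsOrderedRing R]
    {P : R⟦X⟧} (hP : ∀ n, 0 ≤ coeff n P) (k n : ℕ) : 0 ≤ coeff n (P ^ k) := by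
  induction k generalizing n with
  | zero => simp only [pow_zero, coeff_one]; split <;> simp
  | succ k ih =>
    rw [pow_succ, coeff_mul]
    exact sum_nonneg fun p _ => mul_nonneg (ih p.1) (hP p.2)

variable {A : Type*} [CommRing A] [Algebra ℚ A]

noncomputable def truncLogOneAdd (n : ℕ) (C : A⟦X⟧) : A⟦X⟧ :=
  ∑ k ∈ Icc 1 n, ((-1 : ℚ) ^ (k - 1) / k) • C ^ k

theorem logCoeff_eq_coeff_truncLogOneAdd (F : A⟦X⟧) (n : ℕ) :
    logCoeff F n = coeff n (truncLogOneAdd n (F - 1)) := by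
  simp only [logCoeff, truncLogOneAdd, map_sum, coeff_smul]

theorem derivative_truncLogOneAdd_mul (n : ℕ) (C : A⟦X⟧) :
    d⁄dX A (truncLogOneAdd n C) * (1 + C) = (1 - (-C) ^ n) * d⁄dX A C := by
  have hterm : ∀ k ∈ Icc 1 n, d⁄dX A (((-1 : ℚ) ^ (k - 1) / k) • C ^ k) =
      (-C) ^ (k - 1) * d⁄dX A C := by
    intro k hk
    obtain ⟨j, rfl⟩ := Nat.exists_eq_add_of_le' (mem_Icc.mp hk).1
    have hj : ((j + 1 : ℕ) : ℚ) ≠ 0 := by positivity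
    rw [Derivation.map_smul_of_tower, Derivation.leibniz_pow, smul_eq_mul,
      ← Nat.cast_smul_eq_nsmul ℚ, smul_smul, div_mul_cancel₀ _ hj, ← neg_one_smul ℚ C, smul_pow,
      smul_mul_assoc]
  rw [truncLogOneAdd, map_sum, sum_congr rfl hterm, ← sum_mul, ← geom_sum_mul_neg (-C) n,
    ← Finset.Ico_add_one_right_eq_Icc, sum_Ico_eq_sum_range]
  simp only [add_tsub_cancel_left, Nat.add_one_sub_one, sub_neg_eq_add]
  ring

theorem neg_truncLogOneAdd_neg (n : ℕ) (P : A⟦X⟧) :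
    -truncLogOneAdd n (-P) = ∑ k ∈ Icc 1 n, (k : ℚ)⁻¹ • P ^ k := by
  rw [truncLogOneAdd, ← sum_neg_distrib]
  refine sum_congr rfl fun k hk => ?_
  obtain ⟨j, rfl⟩ := Nat.exists_eq_add_of_le' (mem_Icc.mp hk).1
  rw [← neg_one_smul ℚ P, smul_pow, smul_smul, ← neg_smul]
  congr 1
  rw [Nat.add_sub_cancel, pow_succ, mul_neg_one, mul_neg, neg_neg, div_mul_eq_mul_div, ← sq,
    ← pow_mul, pow_mul', neg_one_sq, one_pow, one_div]

theorem coeff_succ_eq_zero_of_coeff_derivative_eq_zero {F : A⟦X⟧} {n : ℕ}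
    (h : coeff n (d⁄dX A F) = 0) : coeff (n + 1) F = 0 := by
  have hunit : IsUnit ((n : A) + 1) := by
    simpa using (Nat.cast_add_one_ne_zero n : ((n : ℚ) + 1) ≠ 0).isUnit.map (algebraMap ℚ A)
  rwa [coeff_derivative, hunit.mul_left_eq_zero] at h

theorem coeff_truncLogOneAdd_sub_one_add_truncLogOneAdd_neg {B P : A⟦X⟧}
    (hP : constantCoeff P = 0) (h : B * (1 - P) = 1) (n : ℕ) :
    coeff n (truncLogOneAdd n (B - 1) + truncLogOneAdd n (-P)) = 0 := by
  rcases n with _ | n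
  · simp [truncLogOneAdd]
  have hB : constantCoeff (1 - B) = 0 := by
    have := congrArg constantCoeff h
    simp only [map_mul, map_sub, map_one, hP, sub_zero, mul_one] at this
    simp [this]
  have hdh : d⁄dX A B * (1 - P) = B * d⁄dX A P := by
    have := congrArg (d⁄dX A) h
    simp only [Derivation.leibniz, map_sub, Derivation.map_one_eq_zero, smul_eq_mul] at this
    linear_combination this
  have hL := derivative_truncLogOneAdd_mul (n + 1) (B - 1)
  have hK := derivative_truncLogOneAdd_mul (n + 1) (-P)
  simp only [map_sub, map_neg, Derivation.map_one_eq_zero, add_sub_cancel, neg_sub,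
    neg_neg] at hL hK
  set L := d⁄dX A (truncLogOneAdd (n + 1) (B - 1))
  set K := d⁄dX A (truncLogOneAdd (n + 1) (-P))
  have hderiv : d⁄dX A (truncLogOneAdd (n + 1) (B - 1) + truncLogOneAdd (n + 1) (-P)) =
      B * d⁄dX A P * (P ^ (n + 1) - (1 - B) ^ (n + 1)) := by
    rw [map_add]
    linear_combination (1 - P) * hL + B * hK + (1 - (1 - B) ^ (n + 1)) * hdh - (L + K) * h
  apply coeff_succ_eq_zero_of_coeff_derivative_eq_zero
  refine X_pow_dvd_iff.mp ?_ n (Nat.lt_succ_self n)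
  rw [hderiv]
  exact dvd_mul_of_dvd_right (dvd_sub (pow_dvd_pow_of_dvd (X_dvd_iff.mpr hP) _)
    (pow_dvd_pow_of_dvd (X_dvd_iff.mpr hB) _)) _

theorem logCoeff_eq_sum_coeff_pow {B P : A⟦X⟧} (hP : constantCoeff P = 0)
    (h : B * (1 - P) = 1) (n : ℕ) :
    logCoeff B n = ∑ k ∈ Icc 1 n, (k : ℚ)⁻¹ • coeff n (P ^ k) := by
  have hsum := coeff_truncLogOneAdd_sub_one_add_truncLogOneAdd_neg hP h n
  rw [map_add, add_eq_zero_iff_eq_neg, ← map_neg, neg_truncLogOneAdd_neg] at hsum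
  simp only [logCoeff_eq_coeff_truncLogOneAdd, hsum, map_sum, coeff_smul]

end PowerSeries

theorem bridgeCount_eq_card_bridges (V : Finset ℤ) (n : ℕ) :
    bridgeCount V n = Nat.card (Bridges (V : Set ℤ) n) :=
  Nat.card_congr <| ((Equiv.vectorEquivFin ℤ n).symm.subtypeEquiv fun v => by
    simp only [Equiv.vectorEquivFin, Equiv.coe_fn_symm_mk, IsBridge]
    rw [← List.Vector.toList, List.Vector.toList_ofFn]
    simp [List.sum_ofFn]).trans (Equiv.subtypeSubtypeEquivSubtypeInter _ _)

noncomputable def primitiveBridgeSeries (V : Finset ℤ) : ℚ⟦X⟧ :=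
  mk fun n => (Nat.card (PrimitiveBridges (V : Set ℤ) n) : ℚ)

theorem constantCoeff_primitiveBridgeSeries (V : Finset ℤ) :
    constantCoeff (primitiveBridgeSeries V) = 0 := by
  simp [primitiveBridgeSeries, ← coeff_zero_eq_constantCoeff_apply]

theorem bridgeSeries_eq_one_add_primitiveBridgeSeries_mul (V : Finset ℤ) :
    bridgeSeries V = 1 + primitiveBridgeSeries V * bridgeSeries V := by
  ext (_ | n)
  · simp [bridgeSeries, primitiveBridgeSeries, bridgeCount_eq_card_bridges, card_bridges_zero]
  · simp [bridgeSeries, primitiveBridgeSeries, coeff_mul, bridgeCount_eq_card_bridges,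
      card_bridges_eq_sum _ n.succ_ne_zero]

/-- The coefficients of the formal logarithm of the bridge generating function are
nonnegative. -/
theorem logCoeff_bridgeSeries_nonneg (V : Finset ℤ) :
    ∀ n : ℕ, 1 ≤ n → 0 ≤ logCoeff (bridgeSeries V) n := by
  intro n _
  have hB : bridgeSeries V * (1 - primitiveBridgeSeries V) = 1 := by
    linear_combination bridgeSeries_eq_one_add_primitiveBridgeSeries_mul V
  rw [logCoeff_eq_sum_coeff_pow (constantCoeff_primitiveBridgeSeries V) hB]
  refine sum_nonneg fun k _ => smul_nonneg (by positivity) (coeff_pow_nonneg (fun m => ?_) k n)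
  simp [primitiveBridgeSeries]
end

section
/- Let V(y) = Σ_{k=−m}^{M} a_k y^k be a Laurent polynomial with real coefficients a_k ≥ 0, where m ≥ 1, M ≥ 1, a_{−m} > 0 and a_M > 0, and let τ > 0 be the unique positive real number with V′(τ) = 0. Then (y − τ)² divides the real polynomial y^m (V(y) − V(τ)) ∈ ℝ[y], and the quotient polynomial Q(y), defined by Q(y)·(y − τ)² = y^m (V(y) − V(τ)), has all its coefficients (from degree 0 up to degree m + M − 2) strictly positive. -/
/-!
Write `P = yᵐ (V(y) - V(τ))`. Its coefficients are those of `yᵐ V`, hence nonnegative, except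
in degree `m`, and its constant term `a₋ₘ` is positive. Since `V'(τ) = 0`, `τ` is a double
root: `P = (y - τ) R` and `R = (y - τ) Q`.

Dividing `p = (y - τ) q` with `τ > 0` controls signs from both ends: `τ qᵢ = qᵢ₋₁ - pᵢ` makes
the low coefficients of `q` positive as long as those of `p` are nonpositive with `p₀ < 0`, and
`qᵢ = Σ_{l > i} τ^(l-i-1) pₗ` makes `qᵢ` positive as soon as all `pₗ` with `l > i` are
nonnegative. Applied to `P` (and `-P`) this shows `R` has negative coefficients below degree `m`
and nonnegative ones from degree `m` on; applied once more, every coefficient of `Q` is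
positive.
-/

open Polynomial Finset Topology

namespace Polynomial

variable {R : Type*} [CommRing R] {p q : R[X]} {τ : R}

theorem coeff_eq_sum_of_eq_X_sub_C_mul (h : p = (X - C τ) * q) (i : ℕ) :
    q.coeff i = ∑ l ∈ Icc (i + 1) p.natDegree, τ ^ (l - (i + 1)) * p.coeff l := by
  have hq : q = p /ₘ (X - C τ) := by rw [h, mul_divByMonic_cancel_left _ (monic_X_sub_C τ)]
  rw [hq, coeff_divByMonic_X_sub_C]

section Ordered

variable [LinearOrder R] [IsStrictOrderedRing R]

theorem coeff_nonneg_of_eq_X_sub_C_mul (hτ : 0 ≤ τ) (h : p = (X - C τ) * q) {i : ℕ}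
    (hp : ∀ l, i < l → 0 ≤ p.coeff l) : 0 ≤ q.coeff i := by
  rw [coeff_eq_sum_of_eq_X_sub_C_mul h]
  exact sum_nonneg fun l hl => mul_nonneg (pow_nonneg hτ _) (hp l (mem_Icc.mp hl).1)

theorem coeff_pos_of_eq_X_sub_C_mul_of_high_nonneg (hτ : 0 < τ) (h : p = (X - C τ) * q)
    {i : ℕ} (hp : ∀ l, i < l → 0 ≤ p.coeff l) (hi : i < p.natDegree) : 0 < q.coeff i := by
  have hp0 : p ≠ 0 := by rintro rfl; simp at hi
  have hlead : 0 < p.coeff p.natDegree :=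
    (hp _ hi).lt_of_ne' (leadingCoeff_ne_zero.mpr hp0)
  rw [coeff_eq_sum_of_eq_X_sub_C_mul h]
  exact sum_pos' (fun l hl => mul_nonneg (pow_nonneg hτ.le _) (hp l (mem_Icc.mp hl).1))
    ⟨p.natDegree, mem_Icc.mpr ⟨hi, le_rfl⟩, mul_pos (pow_pos hτ _) hlead⟩

theorem coeff_pos_of_eq_X_sub_C_mul_of_low_nonpos (hτ : 0 < τ) (h : p = (X - C τ) * q)
    (hp0 : p.coeff 0 < 0) {i : ℕ} (hp : ∀ l ≤ i, p.coeff l ≤ 0) : 0 < q.coeff i := by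
  induction i with
  | zero =>
    have : p.coeff 0 = -τ * q.coeff 0 := by simp [h, mul_coeff_zero]
    nlinarith
  | succ i ih =>
    have hrec : p.coeff (i + 1) = q.coeff i - τ * q.coeff (i + 1) := by
      rw [h, coeff_X_sub_C_mul]
    have := ih fun l hl => hp l (by omega)
    nlinarith [hp (i + 1) le_rfl]

theorem coeff_sign_change_of_eq_X_sub_C_mul (hτ : 0 < τ) (h : p = (X - C τ) * q) {n : ℕ}
    (hp0 : 0 < p.coeff 0) (hp : ∀ l ≠ n, 0 ≤ p.coeff l) :
    (∀ l < n, q.coeff l < 0) ∧ ∀ l, n ≤ l → 0 ≤ q.coeff l := by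
  refine ⟨fun l hl => ?_,
    fun l hl => coeff_nonneg_of_eq_X_sub_C_mul hτ.le h fun l' hl' => hp l' (by omega)⟩
  have hneg : -p = (X - C τ) * -q := by rw [h, mul_neg]
  simpa using coeff_pos_of_eq_X_sub_C_mul_of_low_nonpos hτ hneg (by simpa using hp0)
    fun l' hl' => by simpa using hp l' (by omega)

theorem coeff_pos_of_eq_X_sub_C_mul_of_sign_change (hτ : 0 < τ) (h : p = (X - C τ) * q)
    {n : ℕ} (hlow : ∀ l < n, p.coeff l < 0) (hhigh : ∀ l, n ≤ l → 0 ≤ p.coeff l) {i : ℕ}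
    (hi : i < p.natDegree) : 0 < q.coeff i := by
  rcases lt_or_ge i n with hin | hni
  · exact coeff_pos_of_eq_X_sub_C_mul_of_low_nonpos hτ h (hlow 0 (by omega))
      fun l hl => (hlow l (by omega)).le
  · exact coeff_pos_of_eq_X_sub_C_mul_of_high_nonneg hτ h
      (fun l hl => hhigh l (by omega)) hi

theorem coeff_pos_of_eq_X_sub_C_sq_mul (hτ : 0 < τ) (h : p = (X - C τ) ^ 2 * q) {n : ℕ}
    (hp0 : 0 < p.coeff 0) (hp : ∀ l ≠ n, 0 ≤ p.coeff l) {i : ℕ} (hi : i + 2 ≤ p.natDegree) :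
    0 < q.coeff i := by
  set r := (X - C τ) * q
  have hpr : p = (X - C τ) * r := by rw [h]; ring
  have hr0 : r ≠ 0 := by rintro hr; simp [hpr, hr] at hp0
  have hdeg : p.natDegree = r.natDegree + 1 := by
    rw [hpr, natDegree_mul (X_sub_C_ne_zero τ) hr0, natDegree_X_sub_C, add_comm]
  obtain ⟨hlow, hhigh⟩ := coeff_sign_change_of_eq_X_sub_C_mul hτ hpr hp0 hp
  exact coeff_pos_of_eq_X_sub_C_mul_of_sign_change (p := r) hτ rfl hlow hhigh (by omega)

end Ordered

theorem isRoot_derivative_of_eventually_eval_eq_pow_mul_sub {𝕜 : Type*}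
    [NontriviallyNormedField 𝕜] {P : 𝕜[X]} {V : 𝕜 → 𝕜} {τ : 𝕜} (m : ℕ)
    (hV : HasDerivAt V 0 τ) (h : ∀ᶠ y in 𝓝 τ, P.eval y = y ^ m * (V y - V τ)) :
    P.derivative.IsRoot τ := by
  have hderiv := (hasDerivAt_pow m τ).mul (hV.sub_const (V τ))
  simp only [sub_self, mul_zero, zero_add] at hderiv
  exact (P.hasDerivAt τ).unique (hderiv.congr_of_eventuallyEq h)

end Polynomial

/-- `Xᵐ` times the Laurent polynomial `Σ_{k=-m}^{M} a_k X^k`. -/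
noncomputable def shiftedLaurentPoly {R : Type*} [Semiring R] (m M : ℕ) (a : ℤ → R) : R[X] :=
  ∑ k ∈ Icc (-(m : ℤ)) M, C (a k) * X ^ (k + m).toNat

section ShiftedLaurentPoly

variable (m M : ℕ)

theorem coeff_shiftedLaurentPoly {R : Type*} [Semiring R] (a : ℤ → R) (l : ℕ) :
    (shiftedLaurentPoly m M a).coeff l = if l ≤ m + M then a (l - m) else 0 := by
  have hsum : ∀ k ∈ Icc (-(m : ℤ)) M,
      (if l = (k + m).toNat then a k else 0) = if (l - m : ℤ) = k then a k else 0 :=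
    fun k hk => if_congr (by rw [mem_Icc] at hk; omega) rfl rfl
  simp only [shiftedLaurentPoly, finsetSum_coeff, coeff_C_mul, coeff_X_pow, mul_ite, mul_one,
    mul_zero]
  rw [sum_congr rfl hsum, sum_ite_eq]
  exact if_congr (by rw [mem_Icc]; omega) rfl rfl

theorem natDegree_shiftedLaurentPoly {R : Type*} [Semiring R] {a : ℤ → R} (haM : a M ≠ 0) :
    (shiftedLaurentPoly m M a).natDegree = m + M := by
  refine natDegree_eq_of_le_of_coeff_ne_zero (natDegree_le_iff_coeff_eq_zero.mpr fun l hl => ?_) ?_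
  · rw [coeff_shiftedLaurentPoly, if_neg (by omega)]
  · rwa [coeff_shiftedLaurentPoly, if_pos le_rfl, Nat.cast_add, add_sub_cancel_left]

theorem eval_shiftedLaurentPoly {K : Type*} [Field K] (a : ℤ → K) {y : K} (hy : y ≠ 0) :
    (shiftedLaurentPoly m M a).eval y = y ^ m * ∑ k ∈ Icc (-(m : ℤ)) M, a k * y ^ k := by
  rw [shiftedLaurentPoly, eval_finsetSum, mul_sum]
  refine sum_congr rfl fun k hk => ?_
  have hkm : ((k + m).toNat : ℤ) = k + m := Int.toNat_of_nonneg (by linarith [(mem_Icc.mp hk).1])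
  rw [eval_mul, eval_C, eval_pow, eval_X, ← zpow_natCast, hkm, zpow_add₀ hy, zpow_natCast]
  ring

end ShiftedLaurentPoly

open Polynomial in
/-- Let `V(y) = Σ_{k=−m}^{M} a_k y^k` be a Laurent polynomial with nonnegative real
coefficients, `m, M ≥ 1`, `a_{−m} > 0`, `a_M > 0`, and let `τ > 0` be the critical point,
`V′(τ) = 0`. Then `(y − τ)²` divides the polynomial `y^m (V(y) − V(τ))`, and the quotient
`Q` has strictly positive coefficients in all degrees `0, …, m + M − 2`. -/
theorem quotient_poly_pos_coeffs (m M : ℕ) (hm : 1 ≤ m) (hM : 1 ≤ M) (a : ℤ → ℝ)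
    (ha : ∀ k, 0 ≤ a k) (ham : 0 < a (-(m : ℤ))) (haM : 0 < a (M : ℤ))
    (V : ℝ → ℝ) (hV : V = fun y => ∑ k ∈ Finset.Icc (-(m : ℤ)) (M : ℤ), a k * y ^ k)
    (τ : ℝ) (hτ : 0 < τ) (hcrit : deriv V τ = 0)
    (P : ℝ[X])
    (hP : P = (∑ k ∈ Finset.Icc (-(m : ℤ)) (M : ℤ), C (a k) * X ^ (k + (m : ℤ)).toNat)
        - C (V τ) * X ^ m) :
    ∃ Q : ℝ[X], P = (X - C τ) ^ 2 * Q ∧ ∀ j : ℕ, j ≤ m + M - 2 → 0 < Q.coeff j := by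
  replace hP : P = shiftedLaurentPoly m M a - C (V τ) * X ^ m := hP
  have hcoeff (l : ℕ) (hl : l ≠ m) : P.coeff l = (shiftedLaurentPoly m M a).coeff l := by
    simp [hP, hl]
  have hP0 : 0 < P.coeff 0 := by
    rwa [hcoeff 0 (by omega), coeff_shiftedLaurentPoly, if_pos (by omega), Nat.cast_zero,
      zero_sub]
  have hdeg : P.natDegree = m + M := by
    rw [hP, natDegree_sub_eq_left_of_natDegree_lt] <;>
      rw [natDegree_shiftedLaurentPoly m M haM.ne']
    exact (natDegree_C_mul_X_pow_le _ _).trans_lt (by omega)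
  have heval : ∀ᶠ y in 𝓝 τ, P.eval y = y ^ m * (V y - V τ) :=
    (lt_mem_nhds hτ).mono fun y hy => by
      rw [hP, eval_sub, eval_shiftedLaurentPoly m M a hy.ne', hV]
      simp only [eval_mul, eval_C, eval_pow, eval_X]
      ring
  have hV' : HasDerivAt V 0 τ := by
    have : DifferentiableAt ℝ V τ := by rw [hV]; fun_prop (disch := exact Or.inl hτ.ne')
    exact hcrit ▸ this.hasDerivAt
  have hPne : P ≠ 0 := fun h => by simp [h] at hP0
  obtain ⟨Q, hPQ⟩ : (X - C τ) ^ 2 ∣ P := (le_rootMultiplicity_iff hPne).mp <|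
    (one_lt_rootMultiplicity_iff_isRoot hPne).mpr
      ⟨by simp [heval.self_of_nhds],
        isRoot_derivative_of_eventually_eval_eq_pow_mul_sub m hV' heval⟩
  refine ⟨Q, hPQ, fun j hj => coeff_pos_of_eq_X_sub_C_sq_mul hτ hPQ hP0 (n := m) ?_ (by omega)⟩
  intro l hl
  rw [hcoeff l hl, coeff_shiftedLaurentPoly]
  split_ifs <;> simp [ha]
end

section
/- Let V(y) = Σ_{k=−2}^{M} a_k y^k be a Laurent polynomial with real coefficients a_k ≥ 0, where M ≥ 1, a_{−2} > 0 and a_M > 0, and assume a_k > 0 for at least one odd index k. Let τ > 0 be the unique positive real number with V′(τ) = 0. Then V(−τ) < V(τ), and there exists a real number τ₂ with −τ < τ₂ < 0 and V(τ₂) = V(τ). -/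
open Filter Topology Set

/-- Let `V(y) = Σ_{k=−2}^{M} a_k y^k` be a Laurent polynomial with nonnegative real
coefficients, `a_{−2} > 0`, `a_M > 0`, and at least one positive coefficient at an odd
index; let `τ > 0` be the critical point, `V′(τ) = 0`. Then `V(−τ) < V(τ)`, and there is
a real `τ₂` with `−τ < τ₂ < 0` and `V(τ₂) = V(τ)`. -/
theorem exists_negative_root (M : ℤ) (hM : 1 ≤ M) (a : ℤ → ℝ)
    (ha : ∀ k, 0 ≤ a k) (ha2 : 0 < a (-2)) (haM : 0 < a M)
    (hodd : ∃ k, Odd k ∧ -2 ≤ k ∧ k ≤ M ∧ 0 < a k)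
    (V : ℝ → ℝ) (hV : V = fun y => ∑ k ∈ Finset.Icc (-2 : ℤ) M, a k * y ^ k)
    (τ : ℝ) (hτ : 0 < τ) (hcrit : deriv V τ = 0) :
    V (-τ) < V τ ∧ ∃ τ₂ : ℝ, -τ < τ₂ ∧ τ₂ < 0 ∧ V τ₂ = V τ := by
  obtain ⟨k₀, hk₀odd, hk₀l, hk₀r, hk₀pos⟩ := hodd
  have h1 : V (-τ) < V τ := by
    rw [hV]
    apply Finset.sum_lt_sum
    · intro k _
      apply mul_le_mul_of_nonneg_left _ (ha k)
      rcases Int.even_or_odd k with he | ho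
      · rw [he.neg_zpow]
      · rw [ho.neg_zpow]
        have := zpow_pos hτ k
        linarith
    · refine ⟨k₀, Finset.mem_Icc.2 ⟨hk₀l, hk₀r⟩, ?_⟩
      rw [hk₀odd.neg_zpow]
      have h : 0 < a k₀ * τ ^ k₀ := mul_pos hk₀pos (zpow_pos hτ _)
      nlinarith
  refine ⟨h1, ?_⟩
  set W : ℝ → ℝ := fun y => ∑ k ∈ Finset.Icc (-2 : ℤ) M, a k * y ^ (k + 2) with hWdef
  -- W is continuous at 0 with limit a(-2)
  have hW0 : Tendsto W (𝓝 0) (𝓝 (a (-2))) := by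
    have h := tendsto_finset_sum (Finset.Icc (-2 : ℤ) M)
      (f := fun k (y : ℝ) => a k * y ^ (k + 2))
      (a := fun k => a k * (0 : ℝ) ^ (k + 2)) (x := 𝓝 (0 : ℝ)) ?_
    · have heq : ∑ k ∈ Finset.Icc (-2 : ℤ) M, a k * (0 : ℝ) ^ (k + 2) = a (-2) := by
        rw [Finset.sum_eq_single (-2 : ℤ)]
        · norm_num
        · intro k hk hne
          rw [zero_zpow _ (by omega), mul_zero]
        · intro h; exact absurd (Finset.mem_Icc.2 ⟨le_refl _, by omega⟩) h
      rwa [heq] at h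
    · intro k hk
      have hk2 : (0 : ℤ) ≤ k + 2 := by
        have := (Finset.mem_Icc.1 hk).1; omega
      exact Tendsto.const_mul _ ((continuousAt_zpow₀ (0 : ℝ) (k + 2) (Or.inr hk2)))
  -- y^(-2) → ∞ as y → 0⁻
  have hsq : Tendsto (fun y : ℝ => y * y) (𝓝[<] 0) (𝓝[>] 0) := by
    rw [tendsto_nhdsWithin_iff]
    constructor
    · have : Tendsto (fun y : ℝ => y * y) (𝓝 0) (𝓝 (0 * 0)) :=
        (continuous_id.mul continuous_id).tendsto 0
      simpa using this.mono_left nhdsWithin_le_nhds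
    · filter_upwards [self_mem_nhdsWithin] with y hy
      exact mul_pos_of_neg_of_neg (Set.mem_Iio.mp hy) (Set.mem_Iio.mp hy)
  have hinv : Tendsto (fun y : ℝ => (y * y)⁻¹) (𝓝[<] 0) atTop :=
    hsq.inv_tendsto_nhdsGT_zero
  have hVtop : Tendsto V (𝓝[<] 0) atTop := by
    have hmul : Tendsto (fun y : ℝ => W y * (y * y)⁻¹) (𝓝[<] 0) atTop :=
      Tendsto.pos_mul_atTop ha2 (hW0.mono_left nhdsWithin_le_nhds) hinv
    apply hmul.congr'
    filter_upwards [self_mem_nhdsWithin] with y (hy : y < 0)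
    have hy0 : y ≠ 0 := ne_of_lt hy
    rw [hV, hWdef]
    simp only
    rw [Finset.sum_mul]
    apply Finset.sum_congr rfl
    intro k _
    rw [mul_assoc]
    congr 1
    rw [← zpow_two, ← zpow_neg, ← zpow_add₀ hy0]
    norm_num
  -- pick c ∈ (-τ, 0) with V c ≥ V τ
  have hev : ∀ᶠ y in 𝓝[<] (0 : ℝ), V τ ≤ V y ∧ -τ < y := by
    filter_upwards [hVtop.eventually_ge_atTop (V τ),
      eventually_nhdsWithin_of_eventually_nhds (eventually_gt_nhds (by linarith : -τ < 0))]
      with y h1 h2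
    exact ⟨h1, h2⟩
  obtain ⟨c, ⟨hcV, hcl⟩, hc0⟩ := (hev.and self_mem_nhdsWithin).exists
  have hc0 : c < 0 := hc0
  -- IVT on [-τ, c]
  have hcont : ContinuousOn V (Icc (-τ) c) := by
    rw [hV]
    apply continuousOn_finset_sum
    intro k _
    apply ContinuousOn.mul continuousOn_const
    intro y hy
    have hy0 : y ≠ 0 := by
      rcases hy with ⟨_, hy2⟩; exact ne_of_lt (lt_of_le_of_lt hy2 hc0)
    exact (continuousAt_zpow₀ y k (Or.inl hy0)).continuousWithinAt
  have hsub : Icc (V (-τ)) (V c) ⊆ V '' Icc (-τ) c :=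
    intermediate_value_Icc (le_of_lt hcl) hcont
  obtain ⟨τ₂, hτ₂mem, hτ₂eq⟩ := hsub ⟨le_of_lt h1, hcV⟩
  refine ⟨τ₂, ?_, lt_of_le_of_lt hτ₂mem.2 hc0, hτ₂eq⟩
  rcases lt_or_eq_of_le hτ₂mem.1 with h | h
  · exact h
  · exfalso; rw [← h] at hτ₂eq; linarith
end

section
/- Let V(y) = Σ_{k=−2}^{M} a_k y^k be a Laurent polynomial with real coefficients a_k ≥ 0, where M ≥ 1, a_{−2} > 0 and a_M > 0, and assume a_k > 0 for at least one odd index k. Let τ > 0 be the unique positive real number with V′(τ) = 0. Assume that the polynomial P(y) = y²(V(y) − V(τ)) ∈ ℝ[y] has exactly one complex root, counted with multiplicity, in the open disk {z ∈ ℂ : |z| < τ}. Then this root is a real number τ₂ with −τ < τ₂ < 0, it satisfies V′(τ₂) > 0, and consequently 1/(τ₂ · V′(τ₂)) < 0. -/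
/-!
`P(0) = a₋₂ > 0`, while `P(-τ) = τ²(V(-τ) - V(τ)) < 0` because some odd coefficient is positive,
so `P` has a real root `τ₂ ∈ (-τ, 0)`. Being the only root in `|z| < τ`, `τ₂` is simple and `P`
has no zero on `(τ₂, 0]`, so `P > 0` there. Hence `P'(τ₂) ≥ 0`, and `P'(τ₂) ≠ 0` by simplicity.
Finally `V(τ₂) = V(τ)` gives `P'(τ₂) = τ₂² V'(τ₂)`.
-/

open Polynomial Finset Filter Topology

theorem pos_on_Ioo_of_forall_ne_zero {f : ℝ → ℝ} (hf : Continuous f) {x b : ℝ}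
    (hb : 0 < f b) (hne : ∀ y ∈ Set.Ioo x b, f y ≠ 0) : ∀ y ∈ Set.Ioo x b, 0 < f y := by
  intro y hy
  by_contra! hle
  obtain ⟨z, hz, hfz⟩ := intermediate_value_Ioo hy.2.le hf.continuousOn
    (show (0 : ℝ) ∈ Set.Ioo (f y) (f b) from ⟨hle.lt_of_ne (hne y hy), hb⟩)
  exact hne z ⟨hy.1.trans hz.1, hz.2⟩ hfz

theorem HasDerivAt.nonneg_of_eq_zero_of_nonneg_right {f : ℝ → ℝ} {f' x b : ℝ}
    (hf : HasDerivAt f f' x) (hx : f x = 0) (hxb : x < b) (hnonneg : ∀ y ∈ Set.Ioo x b, 0 ≤ f y) :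
    0 ≤ f' := by
  have hslope := (hasDerivWithinAt_iff_tendsto_slope' Set.self_notMem_Ioi).mp
    (hf.hasDerivWithinAt (s := Set.Ioi x))
  refine ge_of_tendsto hslope ?_
  filter_upwards [Ioo_mem_nhdsGT hxb] with y hy
  rw [slope_def_field, hx, sub_zero]
  exact div_nonneg (hnonneg y hy) (sub_pos.mpr hy.1).le

theorem Polynomial.derivative_eval_ne_zero_of_rootMultiplicity_eq_one {K : Type*} [Field K]
    [CharZero K] {P : K[X]} {x : K} (hx : P.rootMultiplicity x = 1) :
    P.derivative.eval x ≠ 0 := by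
  intro hder
  have hP : P ≠ 0 := by rintro rfl; simp at hx
  have hroot : P.IsRoot x := (rootMultiplicity_pos hP).mp (by omega)
  have := (one_lt_rootMultiplicity_iff_isRoot hP).mpr ⟨hroot, hder⟩
  omega

theorem Polynomial.derivative_eval_pos_of_rootMultiplicity_eq_one {P : ℝ[X]} {x b : ℝ}
    (hx : P.rootMultiplicity x = 1) (hxb : x < b) (hpos : ∀ y ∈ Set.Ioo x b, 0 < P.eval y) :
    0 < P.derivative.eval x := by
  have hroot : P.eval x = 0 := by
    have hP : P ≠ 0 := by rintro rfl; simp at hx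
    exact (rootMultiplicity_pos hP).mp (by omega)
  exact ((P.hasDerivAt x).nonneg_of_eq_zero_of_nonneg_right hroot hxb
    fun y hy => (hpos y hy).le).lt_of_ne'
    (derivative_eval_ne_zero_of_rootMultiplicity_eq_one hx)

section ComplexRoots

variable {P : ℝ[X]} {r : ℝ}

theorem Polynomial.ofReal_mem_roots_map_filter (hP : P ≠ 0) {x : ℝ} (hx : P.IsRoot x)
    (hxr : |x| < r) :
    (x : ℂ) ∈ (P.map (algebraMap ℝ ℂ)).roots.filter fun z => ‖z‖ < r := by
  refine Multiset.mem_filter.mpr ⟨?_, by simpa using hxr⟩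
  rw [mem_roots (Polynomial.map_ne_zero hP), IsRoot, eval_map, ← Complex.coe_algebraMap,
    eval₂_at_apply, hx.eq_zero, map_zero]

theorem Polynomial.rootMultiplicity_eq_one_of_roots_map_filter_eq {x : ℝ} (hxr : |x| < r)
    (hS : ((P.map (algebraMap ℝ ℂ)).roots.filter fun z => ‖z‖ < r) = {(x : ℂ)}) :
    P.rootMultiplicity x = 1 := by
  classical
  have hcount := congrArg (Multiset.count (x : ℂ)) hS
  rw [Multiset.count_filter_of_pos (by simpa using hxr), count_roots,
    Multiset.count_singleton_self] at hcount
  rw [eq_rootMultiplicity_map (algebraMap ℝ ℂ).injective, ← hcount]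
  rfl

end ComplexRoots

noncomputable def laurentSum (a : ℤ → ℝ) (M : ℤ) (y : ℝ) : ℝ :=
  ∑ k ∈ Icc (-2 : ℤ) M, a k * y ^ k

noncomputable def clearedPoly (a : ℤ → ℝ) (M : ℤ) (c : ℝ) : ℝ[X] :=
  (∑ k ∈ Icc (-2 : ℤ) M, C (a k) * X ^ (k + 2).toNat) - C c * X ^ 2

variable {a : ℤ → ℝ} {M : ℤ}

theorem sum_mul_zpow_neg_lt {s : Finset ℤ} (ha : ∀ k, 0 ≤ a k)
    (hodd : ∃ k ∈ s, Odd k ∧ 0 < a k) {τ : ℝ} (hτ : 0 < τ) :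
    ∑ k ∈ s, a k * (-τ) ^ k < ∑ k ∈ s, a k * τ ^ k := by
  obtain ⟨k₀, hk₀, hk₀odd, hak₀⟩ := hodd
  refine sum_lt_sum (fun k _ => mul_le_mul_of_nonneg_left ?_ (ha k))
    ⟨k₀, hk₀, mul_lt_mul_of_pos_left ?_ hak₀⟩
  · rcases Int.even_or_odd k with hk | hk
    · rw [hk.neg_zpow]
    · rw [hk.neg_zpow]
      linarith [zpow_pos hτ k]
  · rw [hk₀odd.neg_zpow]
    linarith [zpow_pos hτ k₀]

theorem differentiableAt_laurentSum {y : ℝ} (hy : y ≠ 0) :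
    DifferentiableAt ℝ (laurentSum a M) y := by
  unfold laurentSum
  fun_prop (disch := exact Or.inl hy)

theorem clearedPoly_eval {c y : ℝ} (hy : y ≠ 0) :
    (clearedPoly a M c).eval y = y ^ 2 * (laurentSum a M y - c) := by
  have hterm : ∀ k ∈ Icc (-2 : ℤ) M, a k * y ^ (k + 2).toNat = y ^ 2 * (a k * y ^ k) := by
    intro k hk
    have hk2 : 0 ≤ k + 2 := by linarith [(mem_Icc.mp hk).1]
    rw [← zpow_natCast, Int.toNat_of_nonneg hk2, zpow_add₀ hy, zpow_two, sq]
    ring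
  simp only [clearedPoly, laurentSum, eval_sub, eval_mul, eval_pow, eval_C, eval_X,
    eval_finsetSum]
  rw [sum_congr rfl hterm, ← mul_sum]
  ring

theorem clearedPoly_eval_zero (hM : -2 ≤ M) (c : ℝ) : (clearedPoly a M c).eval 0 = a (-2) := by
  simp only [clearedPoly, eval_sub, eval_mul, eval_pow, eval_C, eval_X, eval_finsetSum]
  rw [sum_eq_single_of_mem (-2) (mem_Icc.mpr ⟨le_rfl, hM⟩)]
  · simp
  · intro k hk hk2
    have : (k + 2).toNat ≠ 0 := by have := (mem_Icc.mp hk).1; omega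
    simp [zero_pow this]

theorem derivative_clearedPoly_eval {c y : ℝ} (hy : y ≠ 0) (hVy : laurentSum a M y = c) :
    (derivative (clearedPoly a M c)).eval y = y ^ 2 * deriv (laurentSum a M) y := by
  have hcleared : (fun x => (clearedPoly a M c).eval x) =ᶠ[𝓝 y]
      fun x => x ^ 2 * (laurentSum a M x - c) :=
    eventually_ne_nhds hy |>.mono fun x hx => clearedPoly_eval hx
  have hderiv := ((hasDerivAt_pow 2 y).mul
    ((differentiableAt_laurentSum hy).hasDerivAt.sub_const c)).congr_of_eventuallyEq hcleared
  rw [(clearedPoly a M c).hasDerivAt y |>.unique hderiv, hVy]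
  ring

theorem exists_clearedPoly_root_Ioo (hM : -2 ≤ M) (ha : ∀ k, 0 ≤ a k) (ha2 : 0 < a (-2))
    (hodd : ∃ k, Odd k ∧ -2 ≤ k ∧ k ≤ M ∧ 0 < a k) {τ : ℝ} (hτ : 0 < τ) :
    ∃ τ₂ ∈ Set.Ioo (-τ) 0, (clearedPoly a M (laurentSum a M τ)).eval τ₂ = 0 := by
  obtain ⟨k, hk, hk2, hkM, hak⟩ := hodd
  have hVneg : laurentSum a M (-τ) < laurentSum a M τ :=
    sum_mul_zpow_neg_lt ha ⟨k, mem_Icc.mpr ⟨hk2, hkM⟩, hk, hak⟩ hτ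
  have hneg : (clearedPoly a M (laurentSum a M τ)).eval (-τ) < 0 := by
    rw [clearedPoly_eval (neg_ne_zero.mpr hτ.ne')]
    exact mul_neg_of_pos_of_neg (sq_pos_of_neg (neg_neg_of_pos hτ)) (sub_neg.mpr hVneg)
  exact intermediate_value_Ioo (neg_nonpos.mpr hτ.le) (Polynomial.continuousOn _)
    ⟨hneg, (clearedPoly_eval_zero hM _).symm ▸ ha2⟩

open Polynomial in
theorem unique_small_root_real_neg_general (M : ℤ) (hM : 1 ≤ M) (a : ℤ → ℝ)
    (ha : ∀ k, 0 ≤ a k) (ha2 : 0 < a (-2))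
    (hodd : ∃ k, Odd k ∧ -2 ≤ k ∧ k ≤ M ∧ 0 < a k)
    (V : ℝ → ℝ) (hV : V = fun y => ∑ k ∈ Finset.Icc (-2 : ℤ) M, a k * y ^ k)
    (τ : ℝ) (hτ : 0 < τ)
    (P : ℝ[X])
    (hP : P = (∑ k ∈ Finset.Icc (-2 : ℤ) M, C (a k) * X ^ (k + 2).toNat)
        - C (V τ) * X ^ 2)
    (hone : Multiset.card
        ((P.map (algebraMap ℝ ℂ)).roots.filter fun z => ‖z‖ < τ) = 1) :
    ∃ τ₂ : ℝ, -τ < τ₂ ∧ τ₂ < 0 ∧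
      ((P.map (algebraMap ℝ ℂ)).roots.filter fun z => ‖z‖ < τ) = {(τ₂ : ℂ)} ∧
      0 < deriv V τ₂ ∧ 1 / (τ₂ * deriv V τ₂) < 0 := by
  obtain rfl : V = laurentSum a M := hV
  obtain rfl : P = clearedPoly a M (laurentSum a M τ) := hP
  have hM2 : -2 ≤ M := by omega
  have hP0 := clearedPoly_eval_zero hM2 (a := a) (laurentSum a M τ)
  have hPne : clearedPoly a M (laurentSum a M τ) ≠ 0 := by
    rintro h
    rw [h, eval_zero] at hP0
    exact ha2.ne hP0
  obtain ⟨τ₂, ⟨hτ₂l, hτ₂r⟩, hroot⟩ := exists_clearedPoly_root_Ioo hM2 ha ha2 hodd hτ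
  have hsmall : ∀ y ∈ Set.Ioo (-τ) 0, |y| < τ := fun y hy => abs_lt.mpr ⟨hy.1, hy.2.trans hτ⟩
  have hS : ((clearedPoly a M (laurentSum a M τ)).map (algebraMap ℝ ℂ)).roots.filter
      (fun z => ‖z‖ < τ) = {(τ₂ : ℂ)} := by
    obtain ⟨z, hz⟩ := Multiset.card_eq_one.mp hone
    have hmem := ofReal_mem_roots_map_filter hPne hroot (hsmall τ₂ ⟨hτ₂l, hτ₂r⟩)
    rw [hz, Multiset.mem_singleton] at hmem
    rw [hz, hmem]
  have hnoroot : ∀ y ∈ Set.Ioo τ₂ 0, (clearedPoly a M (laurentSum a M τ)).eval y ≠ 0 := by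
    intro y hy hy0
    have hmem := ofReal_mem_roots_map_filter hPne hy0 (hsmall y ⟨hτ₂l.trans hy.1, hy.2⟩)
    rw [hS, Multiset.mem_singleton, Complex.ofReal_inj] at hmem
    exact hy.1.ne' hmem
  have hder := derivative_eval_pos_of_rootMultiplicity_eq_one
    (rootMultiplicity_eq_one_of_roots_map_filter_eq (hsmall τ₂ ⟨hτ₂l, hτ₂r⟩) hS) hτ₂r
    (pos_on_Ioo_of_forall_ne_zero (Polynomial.continuous _) (hP0 ▸ ha2) hnoroot)
  have hVτ₂ : laurentSum a M τ₂ = laurentSum a M τ := by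
    rw [clearedPoly_eval hτ₂r.ne] at hroot
    exact sub_eq_zero.mp ((mul_eq_zero.mp hroot).resolve_left (pow_ne_zero 2 hτ₂r.ne))
  rw [derivative_clearedPoly_eval hτ₂r.ne hVτ₂] at hder
  have hVder : 0 < deriv (laurentSum a M) τ₂ := pos_of_mul_pos_right hder (sq_nonneg τ₂)
  exact ⟨τ₂, hτ₂l, hτ₂r, hS, hVder, one_div_neg.mpr (mul_neg_of_neg_of_pos hτ₂r hVder)⟩

open Polynomial in
/-- Let `V(y) = Σ_{k=−2}^{M} a_k y^k` be a Laurent polynomial with nonnegative real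
coefficients, `a_{−2} > 0`, `a_M > 0`, at least one positive coefficient at an odd index,
and critical point `τ > 0`, `V′(τ) = 0`. If the polynomial `P(y) = y²(V(y) − V(τ))` has
exactly one complex root (with multiplicity) in the open disk `|z| < τ`, then this root is
a real number `τ₂` with `−τ < τ₂ < 0`, `V′(τ₂) > 0`, and `1/(τ₂·V′(τ₂)) < 0`. -/
theorem unique_small_root_real_neg (M : ℤ) (hM : 1 ≤ M) (a : ℤ → ℝ)
    (ha : ∀ k, 0 ≤ a k) (ha2 : 0 < a (-2)) (haM : 0 < a M)
    (hodd : ∃ k, Odd k ∧ -2 ≤ k ∧ k ≤ M ∧ 0 < a k)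
    (V : ℝ → ℝ) (hV : V = fun y => ∑ k ∈ Finset.Icc (-2 : ℤ) M, a k * y ^ k)
    (τ : ℝ) (hτ : 0 < τ) (hcrit : deriv V τ = 0)
    (P : ℝ[X])
    (hP : P = (∑ k ∈ Finset.Icc (-2 : ℤ) M, C (a k) * X ^ (k + 2).toNat)
        - C (V τ) * X ^ 2)
    (hone : Multiset.card
        ((P.map (algebraMap ℝ ℂ)).roots.filter fun z => ‖z‖ < τ) = 1) :
    ∃ τ₂ : ℝ, -τ < τ₂ ∧ τ₂ < 0 ∧
      ((P.map (algebraMap ℝ ℂ)).roots.filter fun z => ‖z‖ < τ) = {(τ₂ : ℂ)} ∧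
      0 < deriv V τ₂ ∧ 1 / (τ₂ * deriv V τ₂) < 0 :=
  unique_small_root_real_neg_general M hM a ha ha2 hodd V hV τ hτ P hP hone
end

section
/- Let V(y) = y^{−2} + Σ_{k=−1}^{M} a_k y^k be a Laurent polynomial whose coefficients a_k all belong to {0,1}, with M ≥ 1 and a_M = 1. Let τ > 0 be the unique positive real number with V′(τ) = 0. Then τ > 1/2. -/
/-!
For `0 < τ ≤ 1/2` the derivative `V'(τ) = -2 τ⁻³ + ∑ a_k k τ^(k-1)` is negative: the first term is
at most `-16`, the terms with `k ≤ 0` are nonpositive, and those with `k ≥ 1` are bounded by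
`k 2^(1-k)`, whose sum over all `k ≥ 1` is `4`. So no critical point lies in `(0, 1/2]`.
-/

open Finset

theorem sum_Icc_int_telescope {G : Type*} [AddCommGroup G] (f : ℤ → G) {a b : ℤ}
    (hab : a ≤ b + 1) : ∑ k ∈ Icc a b, (f (k - 1) - f k) = f (a - 1) - f b := by
  obtain ⟨n, rfl⟩ : ∃ n : ℕ, b = a - 1 + n := ⟨(b - (a - 1)).toNat, by omega⟩
  induction n with
  | zero => simp
  | succ n ih =>
    push_cast
    rw [← add_assoc, ← insert_Icc_right_eq_Icc_add_one (by omega), sum_insert (by simp),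
      ih (by omega)]
    abel_nf

theorem hasDerivAt_sum_mul_zpow (s : Finset ℤ) (c : ℤ → ℝ) {y : ℝ} (hy : y ≠ 0) :
    HasDerivAt (fun y => ∑ k ∈ s, c k * y ^ k) (∑ k ∈ s, c k * (k * y ^ (k - 1))) y :=
  HasDerivAt.fun_sum fun k _ => (hasDerivAt_zpow k y (Or.inl hy)).const_mul (c k)

/-- For `n ≥ 0`, `halfTail n = ∑_{j > n} j 2^{1-j}`; it is frozen at `halfTail 0 = 4` for `n ≤ 0`. -/
noncomputable def halfTail (n : ℤ) : ℝ := 2 * (n.toNat + 2) * (1 / 2) ^ n.toNat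

theorem halfTail_of_nonpos {k : ℤ} (hk : k ≤ 0) : halfTail k = 4 := by
  norm_num [halfTail, Int.toNat_of_nonpos hk]

theorem mul_mul_zpow_sub_one_le_halfTail {x c : ℝ} (hx : 0 < x) (hx2 : x ≤ 1 / 2)
    (hc₀ : 0 ≤ c) (hc₁ : c ≤ 1) (k : ℤ) :
    c * (k * x ^ (k - 1)) ≤ halfTail (k - 1) - halfTail k := by
  rcases le_or_gt k 0 with hk | hk
  · have hterm : (k : ℝ) * x ^ (k - 1) ≤ 0 :=
      mul_nonpos_of_nonpos_of_nonneg (by exact_mod_cast hk) (zpow_pos hx _).le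
    rw [halfTail_of_nonpos hk, halfTail_of_nonpos (by omega), sub_self]
    exact mul_nonpos_of_nonneg_of_nonpos hc₀ hterm
  · obtain ⟨n, rfl⟩ : ∃ n : ℕ, k = n + 1 := ⟨(k - 1).toNat, by omega⟩
    have hpow : x ^ n ≤ (1 / 2) ^ n := pow_le_pow_left₀ hx.le hx2 n
    simp only [halfTail, add_sub_cancel_right, zpow_natCast, Int.toNat_natCast]
    rw [show ((n : ℤ) + 1).toNat = n + 1 by omega]
    push_cast
    calc c * ((n + 1) * x ^ n) ≤ 1 * ((n + 1) * x ^ n) := by gcongr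
      _ ≤ (n + 1) * (1 / 2) ^ n := by rw [one_mul]; gcongr
      _ = _ := by ring

theorem sum_Icc_mul_mul_zpow_sub_one_le {x : ℝ} (hx : 0 < x) (hx2 : x ≤ 1 / 2) {c : ℤ → ℝ}
    (hc₀ : ∀ k, 0 ≤ c k) (hc₁ : ∀ k, c k ≤ 1) (a b : ℤ) :
    ∑ k ∈ Icc a b, c k * (k * x ^ (k - 1)) ≤ halfTail (a - 1) := by
  have htail_nonneg : ∀ k, 0 ≤ halfTail k := fun k => by unfold halfTail; positivity
  rcases le_or_gt a (b + 1) with hab | hab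
  · calc ∑ k ∈ Icc a b, c k * (k * x ^ (k - 1))
        ≤ ∑ k ∈ Icc a b, (halfTail (k - 1) - halfTail k) :=
          sum_le_sum fun k _ => mul_mul_zpow_sub_one_le_halfTail hx hx2 (hc₀ k) (hc₁ k) k
      _ = halfTail (a - 1) - halfTail b := sum_Icc_int_telescope _ hab
      _ ≤ halfTail (a - 1) := sub_le_self _ (htail_nonneg b)
  · rw [Icc_eq_empty (by omega), sum_empty]
    exact htail_nonneg _

theorem critical_point_gt_half_general (M : ℤ) (a : ℤ → ℝ)
    (ha : ∀ k, a k = 0 ∨ a k = 1)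
    (V : ℝ → ℝ)
    (hV : V = fun y => y ^ (-2 : ℤ) + ∑ k ∈ Finset.Icc (-1 : ℤ) M, a k * y ^ k)
    (τ : ℝ) (hτ : 0 < τ) (hcrit : deriv V τ = 0) :
    1 / 2 < τ := by
  by_contra! hτ2
  have ha₀ : ∀ k, 0 ≤ a k := fun k => by rcases ha k with h | h <;> simp [h]
  have ha₁ : ∀ k, a k ≤ 1 := fun k => by rcases ha k with h | h <;> simp [h]
  have hderiv : HasDerivAt V
      ((-2 : ℤ) * τ ^ ((-2 : ℤ) - 1) + ∑ k ∈ Icc (-1) M, a k * (k * τ ^ (k - 1))) τ := by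
    rw [hV]
    exact (hasDerivAt_zpow (-2) τ (.inl hτ.ne')).fun_add (hasDerivAt_sum_mul_zpow _ a hτ.ne')
  have hsum : ∑ k ∈ Icc (-1) M, a k * (k * τ ^ (k - 1)) ≤ 4 := by
    simpa [halfTail_of_nonpos] using sum_Icc_mul_mul_zpow_sub_one_le hτ hτ2 ha₀ ha₁ (-1) M
  have hcube : 8 ≤ (τ ^ 3)⁻¹ := by
    have hinv : 2 ≤ τ⁻¹ := by rw [le_inv_comm₀ two_pos hτ]; linarith
    calc (8 : ℝ) = 2 ^ 3 := by norm_num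
      _ ≤ τ⁻¹ ^ 3 := by gcongr
      _ = (τ ^ 3)⁻¹ := inv_pow τ 3
  rw [hderiv.deriv] at hcrit
  norm_num at hcrit
  linarith

/-- Let `V(y) = y^{−2} + Σ_{k=−1}^{M} a_k y^k` with all `a_k ∈ {0,1}`, `M ≥ 1`, `a_M = 1`,
and let `τ > 0` be the unique positive real with `V′(τ) = 0`. Then `τ > 1/2`. -/
theorem critical_point_gt_half (M : ℤ) (hM : 1 ≤ M) (a : ℤ → ℝ)
    (ha : ∀ k, a k = 0 ∨ a k = 1) (haM : a M = 1)
    (V : ℝ → ℝ)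
    (hV : V = fun y => y ^ (-2 : ℤ) + ∑ k ∈ Finset.Icc (-1 : ℤ) M, a k * y ^ k)
    (τ : ℝ) (hτ : 0 < τ) (hcrit : deriv V τ = 0) :
    1 / 2 < τ :=
  critical_point_gt_half_general M a ha V hV τ hτ hcrit
end

section
/- Let V(y) = Σ_{k=−m}^{M} a_k y^k be a Laurent polynomial with real coefficients a_k ≥ 0, where m ≥ 1, M ≥ 1, a_{−m} > 0 and a_M > 0. Let τ > 0 be the unique positive real number with V′(τ) = 0 and set ρ = 1/V(τ). Then for every real t with 0 < t < ρ, the polynomial P_t(y) = y^m − t·y^m·V(y) ∈ ℝ[y] (of degree m + M) has no root of modulus τ, and it has exactly m roots in ℂ, counted with multiplicity, of modulus strictly less than τ. -/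
/-!
On the circle `‖y‖ = τ` the monomial `(1 - t a₀) y^m` dominates the rest of `P_t`: by the
triangle inequality the other terms have modulus at most `t (τ^m V(τ) - a₀ τ^m)`, which is
smaller than `(1 - t a₀) τ^m` because `t V(τ) < 1`. Hence `P_t` has no root on that circle, and
by Rouché's theorem it has as many roots inside as `y^m`. Rouché's theorem for polynomials
follows from the argument principle, because `log (p / q)` is a primitive of `p'/p - q'/q` on
the circle.
-/

open Polynomial Complex Metric Real

section ArgumentPrinciple

variable {r : ℝ}

theorem circleIntegral_sub_inv_of_norm_ne (hr : 0 < r) {a : ℂ} (ha : ‖a‖ ≠ r) :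
    (∮ z in C(0, r), (z - a)⁻¹) = if ‖a‖ < r then 2 * π * I else 0 := by
  split_ifs with h
  · exact circleIntegral.integral_sub_inv_of_mem_ball (by simpa using h)
  · have har : r < ‖a‖ := lt_of_le_of_ne (not_lt.1 h) ha.symm
    refine DiffContOnCl.circleIntegral_eq_zero hr.le (DifferentiableOn.diffContOnCl ?_)
    rw [closure_ball 0 hr.ne']
    refine (differentiableOn_id.sub_const a).inv fun z hz hza => ?_
    have hza : z = a := sub_eq_zero.1 hza
    rw [mem_closedBall_zero_iff, hza] at hz
    exact absurd hz (not_le.2 har)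

theorem circleIntegral_multiset_sum_sub_inv (hr : 0 < r) (s : Multiset ℂ)
    (hs : ∀ a ∈ s, ‖a‖ ≠ r) :
    (∮ z in C(0, r), (s.map fun a => (z - a)⁻¹).sum) =
      2 * π * I * (s.filter (‖·‖ < r)).card := by
  have hcont : ∀ a ∈ s, ContinuousOn (fun z => (z - a)⁻¹) (sphere (0 : ℂ) r) :=
    fun a ha => (continuous_sub_right a).continuousOn.inv₀ fun z hz hza =>
      hs a ha (by rw [← sub_eq_zero.1 hza]; simpa using hz)
  induction s using Multiset.induction_on with
  | empty => simp [circleIntegral]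
  | cons a s ih =>
    simp only [Multiset.forall_mem_cons] at hs hcont
    simp only [Multiset.map_cons, Multiset.sum_cons]
    rw [circleIntegral.integral_add (hcont.1.circleIntegrable hr.le)
        ((continuousOn_multiset_sum s hcont.2).circleIntegrable hr.le),
      circleIntegral_sub_inv_of_norm_ne hr hs.1, ih hs.2 hcont.2, Multiset.filter_cons]
    split_ifs
    · rw [Multiset.singleton_add, Multiset.card_cons]; push_cast; ring
    · rw [zero_add, zero_add]

theorem Polynomial.circleIntegral_eval_derivative_div_eval (hr : 0 < r) {p : ℂ[X]}
    (hp : ∀ z ∈ sphere (0 : ℂ) r, p.eval z ≠ 0) :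
    (∮ z in C(0, r), p.derivative.eval z / p.eval z) =
      2 * π * I * (p.roots.filter (‖·‖ < r)).card := by
  have hroots : ∀ a ∈ p.roots, ‖a‖ ≠ r := fun a ha h =>
    hp a (by simpa using h) (isRoot_of_mem_roots ha)
  rw [circleIntegral.integral_congr hr.le fun z hz =>
    (IsAlgClosed.splits p).eval_derivative_div_eval_of_ne_zero (hp z hz)]
  simpa only [one_div] using circleIntegral_multiset_sum_sub_inv hr p.roots hroots

/-- Rouché's theorem for polynomials on a circle centred at the origin. -/
theorem Polynomial.card_roots_norm_lt_eq_of_norm_sub_lt (hr : 0 < r) {p q : ℂ[X]}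
    (hpq : ∀ z ∈ sphere (0 : ℂ) r, ‖p.eval z - q.eval z‖ < ‖q.eval z‖) :
    (p.roots.filter (‖·‖ < r)).card = (q.roots.filter (‖·‖ < r)).card := by
  have hq : ∀ z ∈ sphere (0 : ℂ) r, q.eval z ≠ 0 := fun z hz h => by
    simpa [h] using (norm_nonneg _).trans_lt (hpq z hz)
  have hp : ∀ z ∈ sphere (0 : ℂ) r, p.eval z ≠ 0 := fun z hz h => by
    simpa [h] using hpq z hz
  -- `p / q` stays in the unit disc around `1`, where `log` is holomorphic.
  have hprim : ∀ z ∈ sphere (0 : ℂ) r, HasDerivWithinAt (fun w => log (p.eval w / q.eval w))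
      (p.derivative.eval z / p.eval z - q.derivative.eval z / q.eval z) (sphere 0 r) z := by
    intro z hz
    have hslit : p.eval z / q.eval z ∈ slitPlane := by
      have h1 : p.eval z / q.eval z = 1 + (p.eval z - q.eval z) / q.eval z := by
        field_simp [hq z hz]; ring
      rw [h1]
      exact mem_slitPlane_of_norm_lt_one (by
        rw [norm_div, div_lt_one (norm_pos_iff.2 (hq z hz))]; exact hpq z hz)
    refine (((p.hasDerivAt z).div (q.hasDerivAt z) (hq z hz)).clog hslit).hasDerivWithinAt
      |>.congr_deriv ?_
    simp only [Pi.div_apply]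
    field_simp [hp z hz, hq z hz]
  have hcont : ∀ f : ℂ[X], (∀ z ∈ sphere (0 : ℂ) r, f.eval z ≠ 0) →
      CircleIntegrable (fun z => f.derivative.eval z / f.eval z) 0 r := fun f hf =>
    (f.derivative.continuous.continuousOn.div f.continuous.continuousOn hf).circleIntegrable hr.le
  have hzero := circleIntegral.integral_eq_zero_of_hasDerivWithinAt hr.le hprim
  rw [circleIntegral.integral_sub (hcont p hp) (hcont q hq), sub_eq_zero,
    circleIntegral_eval_derivative_div_eval hr hp, circleIntegral_eval_derivative_div_eval hr hq,
    mul_right_inj' (by simp [pi_ne_zero])] at hzero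
  exact_mod_cast hzero

theorem Polynomial.card_roots_C_mul_X_pow_norm_lt (hr : 0 < r) {c : ℂ} (hc : c ≠ 0) (m : ℕ) :
    ((C c * X ^ m).roots.filter (‖·‖ < r)).card = m := by
  rw [roots_C_mul_X_pow hc, Multiset.filter_nsmul, Multiset.filter_singleton, if_pos (by simpa)]
  simp

end ArgumentPrinciple

theorem Polynomial.norm_aeval_le_eval_norm {A : Type*} [SeminormedRing A] [NormedAlgebra ℝ A]
    [NormOneClass A] {Q : ℝ[X]} (hQ : ∀ n, 0 ≤ Q.coeff n) (z : A) :
    ‖aeval z Q‖ ≤ Q.eval ‖z‖ := by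
  rw [aeval_eq_sum_range, eval_eq_sum_range]
  refine (norm_sum_le _ _).trans (Finset.sum_le_sum fun n _ => ?_)
  rw [norm_smul, Real.norm_of_nonneg (hQ n)]
  exact mul_le_mul_of_nonneg_left (norm_pow_le z n) (hQ n)

section SmallRoots

variable {Q : ℝ[X]} {t r : ℝ} {m : ℕ}

theorem Polynomial.norm_aeval_X_pow_sub_C_mul_sub_lt (hQ : ∀ n, 0 ≤ Q.coeff n) (ht : 0 ≤ t)
    (hQr : t * Q.eval r < r ^ m) {z : ℂ} (hz : ‖z‖ = r) :
    ‖aeval z (X ^ m - C t * Q) - ((1 - t * Q.coeff m : ℝ) : ℂ) * z ^ m‖ <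
      ‖((1 - t * Q.coeff m : ℝ) : ℂ) * z ^ m‖ := by
  set R := Q.erase m
  have hR : ∀ n, 0 ≤ R.coeff n := fun n => by
    rw [coeff_erase]; split_ifs
    exacts [le_rfl, hQ n]
  have hQz : aeval z Q = (Q.coeff m : ℂ) * z ^ m + aeval z R := by
    conv_lhs => rw [← monomial_add_erase Q m]
    simp [R]
  have hQr' : Q.eval r = Q.coeff m * r ^ m + R.eval r := by
    conv_lhs => rw [← monomial_add_erase Q m]
    simp [R]
  have hdiff : aeval z (X ^ m - C t * Q) - ((1 - t * Q.coeff m : ℝ) : ℂ) * z ^ m =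
      -((t : ℂ) * aeval z R) := by
    simp only [map_sub, map_mul, map_pow, aeval_X, aeval_C, hQz, coe_algebraMap]
    push_cast; ring
  rw [hdiff]
  calc ‖-((t : ℂ) * aeval z R)‖ ≤ t * R.eval r := by
        rw [norm_neg, norm_mul, norm_real, Real.norm_of_nonneg ht, ← hz]
        exact mul_le_mul_of_nonneg_left (norm_aeval_le_eval_norm hR z) ht
    _ < (1 - t * Q.coeff m) * r ^ m := by rw [hQr'] at hQr; linarith
    _ ≤ ‖((1 - t * Q.coeff m : ℝ) : ℂ) * z ^ m‖ := by
        rw [norm_mul, norm_pow, hz, norm_real, Real.norm_eq_abs]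
        exact mul_le_mul_of_nonneg_right (le_abs_self _) (by rw [← hz]; positivity)

theorem Polynomial.aeval_X_pow_sub_C_mul_ne_zero (hQ : ∀ n, 0 ≤ Q.coeff n) (ht : 0 ≤ t)
    (hQr : t * Q.eval r < r ^ m) {z : ℂ} (hz : ‖z‖ = r) : aeval z (X ^ m - C t * Q) ≠ 0 :=
  fun h => by simpa [h] using norm_aeval_X_pow_sub_C_mul_sub_lt hQ ht hQr hz

theorem Polynomial.card_roots_X_pow_sub_C_mul_norm_lt (hr : 0 < r) (hQ : ∀ n, 0 ≤ Q.coeff n)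
    (ht : 0 ≤ t) (hQr : t * Q.eval r < r ^ m) :
    (((X ^ m - C t * Q).map (algebraMap ℝ ℂ)).roots.filter (‖·‖ < r)).card = m := by
  have hdom {z : ℂ} (hz : ‖z‖ = r) := norm_aeval_X_pow_sub_C_mul_sub_lt hQ ht hQr hz
  have hc : ((1 - t * Q.coeff m : ℝ) : ℂ) ≠ 0 := fun h =>
    (norm_nonneg _).not_gt (by simpa [h] using hdom (z := r) (by simp [hr.le]))
  rw [card_roots_norm_lt_eq_of_norm_sub_lt hr (q := C _ * X ^ m) fun z hz => ?_,
    card_roots_C_mul_X_pow_norm_lt hr hc]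
  simpa using hdom (by simpa using hz)

end SmallRoots

theorem Polynomial.coeff_sum_C_mul_X_pow_nonneg {ι : Type*} (s : Finset ι) {a : ι → ℝ}
    (ha : ∀ i ∈ s, 0 ≤ a i) (e : ι → ℕ) (n : ℕ) :
    0 ≤ (∑ i ∈ s, C (a i) * X ^ e i).coeff n := by
  rw [finsetSum_coeff]
  refine Finset.sum_nonneg fun i hi => ?_
  rw [coeff_C_mul_X_pow]
  split_ifs
  exacts [ha i hi, le_rfl]

theorem Polynomial.eval_sum_C_mul_X_pow_toNat_add {s : Finset ℤ} {m : ℕ}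
    (hs : ∀ k ∈ s, -(m : ℤ) ≤ k) (a : ℤ → ℝ) {x : ℝ} (hx : x ≠ 0) :
    (∑ k ∈ s, C (a k) * X ^ (k + m).toNat).eval x = x ^ m * ∑ k ∈ s, a k * x ^ k := by
  rw [eval_finsetSum, Finset.mul_sum]
  refine Finset.sum_congr rfl fun k hk => ?_
  rw [eval_mul, eval_C, eval_pow, eval_X, ← zpow_natCast,
    Int.toNat_of_nonneg (by linarith [hs k hk]), zpow_add₀ hx, zpow_natCast]
  ring

open Polynomial in
theorem small_branches_count_general (m M : ℕ) (a : ℤ → ℝ)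
    (ha : ∀ k, 0 ≤ a k)
    (V : ℝ → ℝ) (hV : V = fun y => ∑ k ∈ Finset.Icc (-(m : ℤ)) (M : ℤ), a k * y ^ k)
    (τ : ℝ) (hτ : 0 < τ)
    (ρ : ℝ) (hρ : ρ = 1 / V τ) :
    ∀ t : ℝ, 0 < t → t < ρ →
      ∀ Pt : ℝ[X],
        Pt = X ^ m - C t *
            (∑ k ∈ Finset.Icc (-(m : ℤ)) (M : ℤ), C (a k) * X ^ (k + (m : ℤ)).toNat) →
        (∀ z : ℂ, ‖z‖ = τ → Polynomial.aeval z Pt ≠ 0) ∧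
        Multiset.card
          ((Pt.map (algebraMap ℝ ℂ)).roots.filter fun z => ‖z‖ < τ) = m := by
  intro t ht htρ Pt hPt
  set Q := ∑ k ∈ Finset.Icc (-(m : ℤ)) (M : ℤ), C (a k) * X ^ (k + (m : ℤ)).toNat
  have hVτ : V τ = ∑ k ∈ Finset.Icc (-(m : ℤ)) (M : ℤ), a k * τ ^ k := by rw [hV]
  have htV : t * V τ < 1 := by
    have hV0 : 0 ≤ V τ :=
      hVτ ▸ Finset.sum_nonneg fun k _ => mul_nonneg (ha k) (zpow_nonneg hτ.le k)
    rcases hV0.eq_or_lt with h | h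
    · rw [hρ, ← h, div_zero] at htρ
      linarith
    · rwa [hρ, lt_div_iff₀ h] at htρ
  have hQ : ∀ n, 0 ≤ Q.coeff n := coeff_sum_C_mul_X_pow_nonneg _ (fun k _ => ha k) _
  have hQτ : t * Q.eval τ < τ ^ m := by
    rw [eval_sum_C_mul_X_pow_toNat_add (fun k hk => (Finset.mem_Icc.1 hk).1) a hτ.ne', ← hVτ]
    nlinarith [pow_pos hτ m]
  subst hPt
  exact ⟨fun z hz => aeval_X_pow_sub_C_mul_ne_zero hQ ht.le hQτ hz,
    card_roots_X_pow_sub_C_mul_norm_lt hτ hQ ht.le hQτ⟩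

open Polynomial in
/-- Let `V(y) = Σ_{k=−m}^{M} a_k y^k` be a Laurent polynomial with nonnegative real
coefficients, `m, M ≥ 1`, `a_{−m} > 0`, `a_M > 0`, critical point `τ > 0` with
`V′(τ) = 0`, and `ρ = 1/V(τ)`. Then for every `0 < t < ρ` the polynomial
`P_t(y) = y^m − t·y^m·V(y)` has no complex root of modulus `τ`, and it has exactly `m`
complex roots (with multiplicity) of modulus strictly less than `τ`. -/
theorem small_branches_count (m M : ℕ) (hm : 1 ≤ m) (hM : 1 ≤ M) (a : ℤ → ℝ)
    (ha : ∀ k, 0 ≤ a k) (ham : 0 < a (-(m : ℤ))) (haM : 0 < a (M : ℤ))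
    (V : ℝ → ℝ) (hV : V = fun y => ∑ k ∈ Finset.Icc (-(m : ℤ)) (M : ℤ), a k * y ^ k)
    (τ : ℝ) (hτ : 0 < τ) (hcrit : deriv V τ = 0)
    (ρ : ℝ) (hρ : ρ = 1 / V τ) :
    ∀ t : ℝ, 0 < t → t < ρ →
      ∀ Pt : ℝ[X],
        Pt = X ^ m - C t *
            (∑ k ∈ Finset.Icc (-(m : ℤ)) (M : ℤ), C (a k) * X ^ (k + (m : ℤ)).toNat) →
        (∀ z : ℂ, ‖z‖ = τ → Polynomial.aeval z Pt ≠ 0) ∧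
        Multiset.card
          ((Pt.map (algebraMap ℝ ℂ)).roots.filter fun z => ‖z‖ < τ) = m :=
  small_branches_count_general m M a ha V hV τ hτ ρ hρ
end
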